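/- arXiv:cs/0205038 — 3 statements merged into one kernel-verified Lean document; each statement's English description precedes it below -/
import Mathlib

section
/- Let m ≥ 1 and let c(1),…,c(m) be positive reals with Σ_{i=1}^m 1/c(i) > 1. Then, with k = 2m−1 and n = 2m, there exist deterministic online algorithms B(1),…,B(m) of type (2m−1, 2m) such that no deterministic online algorithm A of type (2m−1, 2m) is simultaneously c(i)-competitive against B(i) for every i ∈ {1,…,m}. -/
/-!
Paging model: vertices are `Fin n`, configurations are `k`-element subsets of
`Fin n`.  A deterministic online algorithm of type `(k,n)` maps each request
history to a configuration covering the last request; its cost on `σ` is the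
total number of newly covered vertices over the run starting from `{0,…,k−1}`.
`A` is `c`-competitive against `B` if `C_A(σ) ≤ c·C_B(σ) + a` for some constant
`a` and all `σ`.

STATEMENT (necessity): Let `m ≥ 1` and let `c(1),…,c(m)` be positive reals with
`Σ 1/c(i) > 1`.  Then, with `k = 2m−1` and `n = 2m`, there exist deterministic
online algorithms `B(1),…,B(m)` of type `(2m−1, 2m)` such that no deterministic
online algorithm `A` of type `(2m−1, 2m)` is simultaneously `c(i)`-competitive
against `B(i)` for every `i`.
-/

/-- The initial configuration `{0, …, k−1}` as a subset of `Fin n`. -/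
def initConf (k n : ℕ) : Finset (Fin n) :=
  Finset.univ.filter (fun v => (v : ℕ) < k)

/-- A deterministic online algorithm of type `(k,n)`: a map from request
histories to `k`-element configurations, such that after any request the
configuration covers that request. -/
structure DetAlg (k n : ℕ) where
  conf : List (Fin n) → Finset (Fin n)
  card_eq : ∀ l : List (Fin n), (conf l).card = k
  mem_last : ∀ (l : List (Fin n)) (r : Fin n), r ∈ conf (l ++ [r])

/-- The configuration of `A` after the first `t` requests of `σ`
(the configuration at time `0` is `{0,…,k−1}`). -/
def detConfAt {k n : ℕ} (A : DetAlg k n) (σ : List (Fin n)) (t : ℕ) : Finset (Fin n) :=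
  if t = 0 then initConf k n else A.conf (σ.take t)

/-- The cost incurred by the deterministic online algorithm `A` on the request
sequence `σ`. -/
def detCost {k n : ℕ} (A : DetAlg k n) (σ : List (Fin n)) : ℕ :=
  ∑ t ∈ Finset.range σ.length, (detConfAt A σ (t + 1) \ detConfAt A σ t).card

/-!
Against the cruel adversary, which always requests a vertex missing from the configuration of `A`,
the algorithm `A` pays on every request. Let `B i` keep a single hole inside the pair `{2i, 2i+1}`,
at the partner of the last request in that pair. Then on each request at most one `B i` pays, so
after `T` requests `∑ᵢ cost(B i) ≤ m + T`. Competitiveness gives `T / c i ≤ cost(B i) + O(1)`;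
summing, `T · ∑ᵢ 1 / c i ≤ T + O(1)`, which fails for large `T` when `∑ᵢ 1 / c i > 1`.
-/

theorem List.sum_countP_eq_length {α β : Type*} [Fintype β] [DecidableEq β] (f : α → β)
    (l : List α) : ∑ b, l.countP (fun a => f a = b) = l.length := by
  induction l with
  | nil => simp
  | cons a l ih => simp [List.countP_cons, Finset.sum_add_distrib, ih]

theorem card_initConf {k n : ℕ} (h : k ≤ n) : (initConf k n).card = k := by
  rw [initConf, Fin.card_filter_val_lt, min_eq_right h]

namespace DetAlg

variable {k n : ℕ} (A : DetAlg k n)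

def confAfter (l : List (Fin n)) : Finset (Fin n) :=
  if l = [] then initConf k n else A.conf l

theorem card_confAfter (h : k ≤ n) (l : List (Fin n)) : (A.confAfter l).card = k := by
  unfold confAfter
  split
  · exact card_initConf h
  · exact A.card_eq l

theorem detConfAt_eq_confAfter {σ : List (Fin n)} {t : ℕ} (ht : t ≤ σ.length) :
    detConfAt A σ t = A.confAfter (σ.take t) := by
  rcases Nat.eq_zero_or_pos t with rfl | ht0
  · simp [detConfAt, confAfter]
  · have : σ.take t ≠ [] := fun h => by
      have := congrArg List.length h
      simp only [List.length_take, List.length_nil] at this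
      omega
    simp [detConfAt, confAfter, ht0.ne', this]

@[simp]
theorem detCost_nil : detCost A [] = 0 := by simp [detCost]

theorem detCost_append_singleton (l : List (Fin n)) (r : Fin n) :
    detCost A (l ++ [r]) = detCost A l + (A.conf (l ++ [r]) \ A.confAfter l).card := by
  have hconf : ∀ t ≤ l.length, detConfAt A (l ++ [r]) t = detConfAt A l t := fun t ht => by
    rw [detConfAt_eq_confAfter A (by simp; omega), detConfAt_eq_confAfter A ht,
      List.take_append_of_le_length ht]
  have hlast : detConfAt A (l ++ [r]) (l.length + 1) = A.conf (l ++ [r]) := by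
    rw [detConfAt, if_neg l.length.succ_ne_zero, ← List.length_concat, List.concat_eq_append,
      List.take_length]
  rw [detCost, List.length_append, List.length_singleton, Finset.sum_range_succ, detCost, hlast,
    hconf _ le_rfl, detConfAt_eq_confAfter A le_rfl, List.take_length]
  congr 1
  refine Finset.sum_congr rfl fun t ht => ?_
  rw [Finset.mem_range] at ht
  rw [hconf t ht.le, hconf (t + 1) ht]

theorem card_sdiff_confAfter_le (h : k ≤ n) (s : Finset (Fin n)) (l : List (Fin n)) :
    (s \ A.confAfter l).card ≤ n - k :=
  calc (s \ A.confAfter l).card ≤ (A.confAfter l)ᶜ.card :=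
        Finset.card_le_card fun v hv => Finset.mem_compl.mpr (Finset.mem_sdiff.mp hv).2
    _ = n - k := by rw [Finset.card_compl, Fintype.card_fin, A.card_confAfter h]

theorem exists_length_eq_le_detCost (h : k < n) (T : ℕ) :
    ∃ σ : List (Fin n), σ.length = T ∧ T ≤ detCost A σ := by
  induction T with
  | zero => exact ⟨[], rfl, le_rfl⟩
  | succ T ih =>
    obtain ⟨σ, hlen, hcost⟩ := ih
    obtain ⟨r, hr⟩ : (A.confAfter σ)ᶜ.Nonempty := by
      rw [← Finset.card_pos, Finset.card_compl, Fintype.card_fin, A.card_confAfter h.le]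
      omega
    have hstep : 0 < (A.conf (σ ++ [r]) \ A.confAfter σ).card :=
      Finset.card_pos.mpr ⟨r, Finset.mem_sdiff.mpr ⟨A.mem_last σ r, Finset.mem_compl.mp hr⟩⟩
    refine ⟨σ ++ [r], by simp [hlen], ?_⟩
    rw [A.detCost_append_singleton]
    omega

end DetAlg

namespace Pairs

variable {m : ℕ}

def pairOf (v : Fin (2 * m)) : Fin m := ⟨v / 2, by omega⟩

def partner (v : Fin (2 * m)) : Fin (2 * m) :=
  ⟨if v.val % 2 = 0 then v + 1 else v - 1, by split <;> omega⟩

theorem partner_ne (v : Fin (2 * m)) : partner v ≠ v := by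
  simp only [partner, ne_eq, Fin.ext_iff]
  split <;> omega

theorem pairOf_partner (v : Fin (2 * m)) : pairOf (partner v) = pairOf v := by
  simp only [pairOf, partner, Fin.ext_iff]
  split <;> omega

def lastInPair (i : Fin m) (l : List (Fin (2 * m))) : Fin (2 * m) :=
  (l.filter (pairOf · = i)).getLastD ⟨2 * i + 1, by omega⟩

theorem pairOf_lastInPair (i : Fin m) (l : List (Fin (2 * m))) :
    pairOf (lastInPair i l) = i := by
  rcases List.mem_cons.mp (List.getLastD_mem_cons (l := l.filter (pairOf · = i))
    (a := ⟨2 * i + 1, by omega⟩)) with h | h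
  · rw [lastInPair, h]
    simp only [pairOf, Fin.ext_iff]
    omega
  · rw [lastInPair]
    exact of_decide_eq_true (List.mem_filter.mp h).2

theorem lastInPair_append_singleton (i : Fin m) (l : List (Fin (2 * m))) (r : Fin (2 * m)) :
    lastInPair i (l ++ [r]) = if pairOf r = i then r else lastInPair i l := by
  unfold lastInPair
  split_ifs with h <;> simp [List.filter_append, h]

def pairAlg (i : Fin m) : DetAlg (2 * m - 1) (2 * m) where
  conf l := Finset.univ.erase (partner (lastInPair i l))
  card_eq l := by simp [Finset.card_erase_of_mem]
  mem_last l r := by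
    refine Finset.mem_erase.mpr ⟨?_, Finset.mem_univ r⟩
    rw [lastInPair_append_singleton]
    split_ifs with h
    · exact (partner_ne r).symm
    · intro he
      exact h (by rw [he, pairOf_partner, pairOf_lastInPair])

theorem detCost_pairAlg_le (i : Fin m) (σ : List (Fin (2 * m))) :
    detCost (pairAlg i) σ ≤ 1 + σ.countP (pairOf · = i) := by
  induction σ using List.reverseRecOn with
  | nil => simp
  | append_singleton l r ih =>
    rw [DetAlg.detCost_append_singleton, List.countP_append]
    have hstep : ((pairAlg i).conf (l ++ [r]) \ (pairAlg i).confAfter l).card ≤ 1 :=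
      ((pairAlg i).card_sdiff_confAfter_le (by omega) _ l).trans (by omega)
    by_cases hl : l = []
    · subst hl
      simp only [DetAlg.detCost_nil, List.countP_nil]
      omega
    by_cases hr : pairOf r = i
    · simp only [List.countP_singleton, hr, decide_true, if_true]
      omega
    · have hconf : (pairAlg i).conf (l ++ [r]) = (pairAlg i).confAfter l := by
        simp only [DetAlg.confAfter, if_neg hl, pairAlg, lastInPair_append_singleton, if_neg hr]
      simp only [hconf, Finset.sdiff_self, Finset.card_empty, List.countP_singleton, hr,
        decide_false]
      omega

theorem sum_detCost_pairAlg_le (σ : List (Fin (2 * m))) :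
    ∑ i, detCost (pairAlg i) σ ≤ m + σ.length :=
  calc ∑ i, detCost (pairAlg i) σ ≤ ∑ i, (1 + σ.countP (pairOf · = i)) :=
        Finset.sum_le_sum fun i _ => detCost_pairAlg_le i σ
    _ = m + σ.length := by
        rw [Finset.sum_add_distrib, List.sum_countP_eq_length]
        simp

end Pairs

theorem mul_sum_one_div_le_of_le_mul_add {ι : Type*} [Fintype ι] {c a x : ι → ℝ} {T : ℝ}
    (hc : ∀ i, 0 < c i) (h : ∀ i, T ≤ c i * x i + a i) :
    T * ∑ i, 1 / c i ≤ ∑ i, x i + ∑ i, a i / c i := by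
  rw [Finset.mul_sum, ← Finset.sum_add_distrib]
  refine Finset.sum_le_sum fun i _ => ?_
  rw [mul_one_div, div_le_iff₀ (hc i), add_mul, div_mul_cancel₀ _ (hc i).ne']
  linarith [h i]

/-- Necessity: if `Σ 1/c(i) > 1` then no single online algorithm of type
`(2m−1, 2m)` can be `c(i)`-competitive against suitably chosen algorithms
`B(1),…,B(m)` simultaneously. -/
theorem no_combining_when_sum_exceeds_one (m : ℕ) (hm : 1 ≤ m)
    (c : Fin m → ℝ) (hc : ∀ i, 0 < c i) (hsum : 1 < ∑ i, 1 / c i) :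
    ∃ B : Fin m → DetAlg (2 * m - 1) (2 * m),
      ¬ ∃ A : DetAlg (2 * m - 1) (2 * m), ∀ i : Fin m, ∃ a : ℝ,
        ∀ σ : List (Fin (2 * m)),
          (detCost A σ : ℝ) ≤ c i * (detCost (B i) σ : ℝ) + a := by
  refine ⟨Pairs.pairAlg, ?_⟩
  rintro ⟨A, hA⟩
  choose a ha using hA
  obtain ⟨T, hT⟩ := exists_nat_gt ((m + ∑ i, a i / c i) / (∑ i, 1 / c i - 1))
  rw [div_lt_iff₀ (by linarith)] at hT
  obtain ⟨σ, hlen, hcost⟩ := A.exists_length_eq_le_detCost (by omega) T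
  have hweighted :
      (T : ℝ) * ∑ i, 1 / c i ≤ ∑ i, (detCost (Pairs.pairAlg i) σ : ℝ) + ∑ i, a i / c i :=
    mul_sum_one_div_le_of_le_mul_add hc fun i => (Nat.cast_le.mpr hcost).trans (ha i σ)
  have hpairs : ∑ i, (detCost (Pairs.pairAlg i) σ : ℝ) ≤ m + T := by
    exact_mod_cast hlen ▸ Pairs.sum_detCost_pairAlg_le σ
  linarith
end

section
/- Let c : Fin m → ℝ with c(i) > 0 for every i and Σ_i 1/c(i) ≤ 1. Let P : ℕ → Fin m → ℕ satisfy P(0, i) = 0 for all i, and for each t let P(t+1) be obtained from P(t) by incrementing the value at a single index i_t which minimizes c(i)·(P(t, i) + 1) over all i ∈ Fin m (any minimizer may be chosen). Then for every r ∈ ℕ and every i ∈ Fin m, P(r, i) ≥ ⌊r / c(i)⌋. -/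
/-!
The greedy rule keeps the counts balanced: `c j * P t j ≤ c k * (P t k + 1)` for all `j, k`,
since the incremented index is the one minimising `c k * (P t k + 1)`. Raising the `i`-th count
of `P r` by one then gives a vector `q` with `c j * q j ≤ V := c i * (P r i + 1)` for every `j`,
so `r + 1 = ∑ q ≤ V * ∑ 1 / c j ≤ V`, i.e. `r / c i < P r i + 1`.
-/

open Finset Function

section

variable {ι : Type*}

theorem sum_le_of_forall_mul_le [Fintype ι] {c q : ι → ℝ} {V : ℝ} (hc : ∀ j, 0 < c j)
    (hsum : ∑ j, 1 / c j ≤ 1) (hV : 0 ≤ V) (h : ∀ j, c j * q j ≤ V) : ∑ j, q j ≤ V :=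
  calc ∑ j, q j ≤ ∑ j, V * (1 / c j) :=
        sum_le_sum fun j _ => by rw [mul_one_div, le_div_iff₀ (hc j), mul_comm]; exact h j
    _ = V * ∑ j, 1 / c j := (mul_sum ..).symm
    _ ≤ V := mul_le_of_le_one_right hV hsum

def IsBalanced (c : ι → ℝ) (p : ι → ℕ) : Prop :=
  ∀ j k, c j * p j ≤ c k * (p k + 1)

theorem isBalanced_zero {c : ι → ℝ} (hc : ∀ j, 0 ≤ c j) : IsBalanced c 0 := fun j k => by
  simpa using hc k

variable [DecidableEq ι]

def IsGreedyStep (c : ι → ℝ) (p p' : ι → ℕ) : Prop :=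
  ∃ i, (∀ j, c i * ((p i : ℝ) + 1) ≤ c j * ((p j : ℝ) + 1)) ∧ p' = update p i (p i + 1)

theorem IsBalanced.of_isGreedyStep {c : ι → ℝ} {p p' : ι → ℕ} (hc : ∀ j, 0 ≤ c j)
    (hp : IsBalanced c p) (h : IsGreedyStep c p p') : IsBalanced c p' := by
  obtain ⟨i, hmin, rfl⟩ := h
  have hgrow : ∀ k, c k * ((p k : ℝ) + 1) ≤ c k * ((update p i (p i + 1) k : ℝ) + 1) := fun k => by
    gcongr
    · exact hc k
    · rcases eq_or_ne k i with rfl | hk <;> simp [*]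
  intro j k
  refine le_trans ?_ (hgrow k)
  rcases eq_or_ne j i with rfl | hj
  · simpa using hmin k
  · simpa [hj] using hp j k

theorem isBalanced_of_isGreedyStep {c : ι → ℝ} {P : ℕ → ι → ℕ} (hc : ∀ j, 0 ≤ c j)
    (h0 : ∀ i, P 0 i = 0) (hstep : ∀ t, IsGreedyStep c (P t) (P (t + 1))) (t : ℕ) :
    IsBalanced c (P t) := by
  induction t with
  | zero => exact funext h0 ▸ isBalanced_zero hc
  | succ t ih => exact ih.of_isGreedyStep hc (hstep t)

variable [Fintype ι]

theorem sum_update_add_one (p : ι → ℕ) (i : ι) : ∑ j, update p i (p i + 1) j = ∑ j, p j + 1 := by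
  rw [sum_update_of_mem (mem_univ i), ← add_sum_erase _ _ (mem_univ i), sdiff_singleton_eq_erase]
  ring

theorem IsGreedyStep.sum_eq {c : ι → ℝ} {p p' : ι → ℕ} (h : IsGreedyStep c p p') :
    ∑ j, p' j = ∑ j, p j + 1 := by
  obtain ⟨i, -, rfl⟩ := h
  exact sum_update_add_one p i

theorem sum_eq_of_isGreedyStep {c : ι → ℝ} {P : ℕ → ι → ℕ} (h0 : ∀ i, P 0 i = 0)
    (hstep : ∀ t, IsGreedyStep c (P t) (P (t + 1))) (t : ℕ) : ∑ i, P t i = t := by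
  induction t with
  | zero => simp [h0]
  | succ t ih => rw [(hstep t).sum_eq, ih]

theorem IsBalanced.sum_add_one_le {c : ι → ℝ} {p : ι → ℕ} (hc : ∀ j, 0 < c j)
    (hsum : ∑ j, 1 / c j ≤ 1) (hp : IsBalanced c p) (i : ι) :
    ((∑ j, p j : ℕ) : ℝ) + 1 ≤ c i * (p i + 1) := by
  have hq : ∀ j, c j * (update p i (p i + 1) j : ℝ) ≤ c i * (p i + 1) := fun j => by
    rcases eq_or_ne j i with rfl | hj
    · simp
    · simpa [hj] using hp j i
  have := sum_le_of_forall_mul_le hc hsum (by positivity [hc i]) hq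
  rwa [← Nat.cast_sum, sum_update_add_one, Nat.cast_add_one] at this

end

theorem greedy_punishing_counts_general (m : ℕ)
    (c : Fin m → ℝ) (hc : ∀ i, 0 < c i) (hsum : ∑ i, 1 / c i ≤ 1)
    (P : ℕ → Fin m → ℕ) (h0 : ∀ i, P 0 i = 0)
    (hstep : ∀ t : ℕ, ∃ i : Fin m,
      (∀ j : Fin m, c i * ((P t i : ℝ) + 1) ≤ c j * ((P t j : ℝ) + 1)) ∧
      P (t + 1) = Function.update (P t) i (P t i + 1)) :
    ∀ (r : ℕ) (i : Fin m), ⌊(r : ℝ) / c i⌋ ≤ (P r i : ℤ) := by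
  intro r i
  have key := (isBalanced_of_isGreedyStep (fun j => (hc j).le) h0 hstep r).sum_add_one_le hc hsum i
  rw [sum_eq_of_isGreedyStep h0 hstep r] at key
  rw [Int.floor_le_iff, div_lt_iff₀ (hc i)]
  push_cast
  linarith

theorem greedy_punishing_counts (m : ℕ) (hm : 1 ≤ m)
    (c : Fin m → ℝ) (hc : ∀ i, 0 < c i) (hsum : ∑ i, 1 / c i ≤ 1)
    (P : ℕ → Fin m → ℕ) (h0 : ∀ i, P 0 i = 0)
    (hstep : ∀ t : ℕ, ∃ i : Fin m,
      (∀ j : Fin m, c i * ((P t i : ℝ) + 1) ≤ c j * ((P t j : ℝ) + 1)) ∧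
      P (t + 1) = Function.update (P t) i (P t i + 1)) :
    ∀ (r : ℕ) (i : Fin m), ⌊(r : ℝ) / c i⌋ ≤ (P r i : ℤ) :=
  greedy_punishing_counts_general m c hc hsum P h0 hstep
end

section
/- Consider the marking algorithm of type (2,4) (two servers on the four vertices {0,1,2,3}, starting on {0,1}). For each N ≥ 1 let σ_N be the request sequence consisting of N repetitions of the block (2,3,0,1,3,2,1,0). Then the marking algorithm's expected cost on σ_N is exactly 8N, while OPT(σ_N) ≤ 4N + 1. Consequently, the marking algorithm of type (2,4) is not c-competitive for any c < 2; in particular it is not H_2-competitive (H_2 = 3/2). -/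
/-!
Paging model with `k = 2`, `n = 4`: vertices are `Fin 4`, configurations are
2-element subsets of `Fin 4`.  `OPT` is the optimal offline cost and `expCost`
the expected cost of a randomized online algorithm (given by its transition
kernel), starting from `{0,1}`; `markingKernel` is the marking algorithm and
`harmonic 2 = H_2 = 3/2`.

STATEMENT: For each `N ≥ 1`, let `σ_N` be the request sequence consisting of `N`
repetitions of the block `(2,3,0,1,3,2,1,0)`.  Then the marking algorithm's
expected cost on `σ_N` is exactly `8N`, while `OPT(σ_N) ≤ 4N + 1`.  Consequently,
the marking algorithm of type `(2,4)` is not `c`-competitive for any `c < 2`;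
in particular it is not `H_2`-competitive.
-/

open scoped ENNReal

/-- The cost of a sequence of configurations, starting from configuration `C`:
the sum over consecutive steps of the number of newly covered vertices. -/
def listCost {n : ℕ} : Finset (Fin n) → List (Finset (Fin n)) → ℕ
  | _, [] => 0
  | C, D :: L => (D \ C).card + listCost D L

/-- `Cs` is a service of the request sequence `σ` by `k`-element configurations:
the `t`-th configuration covers the `t`-th request. -/
def Serves {n : ℕ} (k : ℕ) (σ : List (Fin n)) (Cs : List (Finset (Fin n))) : Prop :=
  List.Forall₂ (· ∈ ·) σ Cs ∧ ∀ C ∈ Cs, C.card = k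

/-- The optimal offline cost of serving `σ`, starting from `{0,…,k−1}`. -/
noncomputable def OPT (k n : ℕ) (σ : List (Fin n)) : ℕ :=
  sInf {m | ∃ Cs, Serves k σ Cs ∧ listCost (initConf k n) Cs = m}

/-- A (transition kernel of a) randomized online algorithm: given the request history,
the current configuration and a new request, produce a distribution over configurations. -/
abbrev Kernel (n : ℕ) := List (Fin n) → Finset (Fin n) → Fin n → PMF (Finset (Fin n))

/-- The distribution over configuration sequences induced by running kernel `K`
on request sequence `σ`, with history `hist` and current configuration `C`. -/
noncomputable def runFrom {n : ℕ} (K : Kernel n) :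
    List (Fin n) → List (Fin n) → Finset (Fin n) → PMF (List (Finset (Fin n)))
  | [], _, _ => PMF.pure []
  | r :: rest, hist, C =>
      (K hist C r).bind fun C' =>
        (runFrom K rest (hist ++ [r]) C').map fun L => C' :: L

/-- The distribution over configuration sequences induced by running kernel `K`
on request sequence `σ`, starting from the configuration `{0,…,k−1}`. -/
noncomputable def run {n : ℕ} (k : ℕ) (K : Kernel n) (σ : List (Fin n)) :
    PMF (List (Finset (Fin n))) :=
  runFrom K σ [] (initConf k n)

/-- The expected cost of the randomized online algorithm with kernel `K` on `σ`. -/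
noncomputable def expCost {n : ℕ} (k : ℕ) (K : Kernel n) (σ : List (Fin n)) : ℝ :=
  ∑' Cs : List (Finset (Fin n)),
    ((run k K σ) Cs).toReal * (listCost (initConf k n) Cs : ℝ)

/-- One step of the marking process: mark `r`; if `k+1` vertices are marked,
erase all marks except the one on `r`. -/
def markUpdate {n : ℕ} (k : ℕ) (M : Finset (Fin n)) (r : Fin n) : Finset (Fin n) :=
  if (insert r M).card = k + 1 then {r} else insert r M

/-- The set of marked vertices after processing the request sequence `σ`
(initially the vertices `{0,…,k−1}` are marked). -/
def marksAfter {n : ℕ} (k : ℕ) (σ : List (Fin n)) : Finset (Fin n) :=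
  σ.foldl (markUpdate k) (initConf k n)

/-- The marking algorithm of type `(k,n)`: on a request `r`, first update the marks;
if `r` is covered do nothing, and otherwise evict a uniformly random unmarked
covered vertex and move its server to `r`. -/
noncomputable def markingKernel (k n : ℕ) : Kernel n := fun hist C r =>
  let M := marksAfter k (hist ++ [r])
  if r ∈ C then PMF.pure C
  else if h : (C \ M).Nonempty then
    (PMF.uniformOfFinset (C \ M) h).map fun u => insert r (C.erase u)
  else PMF.pure (insert r (C.erase (if h2 : C.Nonempty then C.min' h2 else r)))

/-- The request block `(2,3,0,1,3,2,1,0)` on the vertices `Fin 4`. -/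
def badBlock : List (Fin 4) := [2, 3, 0, 1, 3, 2, 1, 0]

/-- The request sequence consisting of `N` repetitions of the block. -/
def badSeq (N : ℕ) : List (Fin 4) := (List.replicate N badBlock).flatten

lemma initConf_eq : initConf 2 4 = ({0,1} : Finset (Fin 4)) := by decide

lemma badSeq_succ (N : ℕ) : badSeq (N+1) = badBlock ++ badSeq N := by
  simp [badSeq, List.replicate_succ]

def blockWit : List (Finset (Fin 4)) :=
  [{0,2},{0,3},{0,3},{1,3},{1,3},{1,2},{1,2},{0,2}]

def wit (N : ℕ) : List (Finset (Fin 4)) := (List.replicate N blockWit).flatten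

lemma wit_succ (N : ℕ) : wit (N+1) = blockWit ++ wit N := by
  simp [wit, List.replicate_succ]

lemma serves_wit (N : ℕ) : Serves 2 (badSeq N) (wit N) := by
  induction N with
  | zero => exact ⟨by simp [badSeq, wit], by simp [wit]⟩
  | succ n ih =>
    rw [badSeq_succ, wit_succ]
    refine ⟨List.rel_append ?_ ih.1, ?_⟩
    · simp [badBlock, blockWit, List.forall₂_cons]
    · intro C hC
      rcases List.mem_append.1 hC with h | h
      · have hall : ∀ C ∈ blockWit, Finset.card C = 2 := by decide
        exact hall C h
      · exact ih.2 C h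

lemma listCost_block02 (L : List (Finset (Fin 4))) :
    listCost {0,2} (blockWit ++ L) = 4 + listCost {0,2} L := by
  have c1 : ((({0,2} : Finset (Fin 4))) \ {0,2}).card = 0 := by decide
  have c2 : ((({0,3} : Finset (Fin 4))) \ {0,2}).card = 1 := by decide
  have c3 : ((({0,3} : Finset (Fin 4))) \ {0,3}).card = 0 := by decide
  have c4 : ((({1,3} : Finset (Fin 4))) \ {0,3}).card = 1 := by decide
  have c5 : ((({1,3} : Finset (Fin 4))) \ {1,3}).card = 0 := by decide
  have c6 : ((({1,2} : Finset (Fin 4))) \ {1,3}).card = 1 := by decide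
  have c7 : ((({1,2} : Finset (Fin 4))) \ {1,2}).card = 0 := by decide
  have c8 : ((({0,2} : Finset (Fin 4))) \ {1,2}).card = 1 := by decide
  have d1 : ((({3} : Finset (Fin 4))) \ {0,2}).card = 1 := by decide
  have d2 : ((({2} : Finset (Fin 4))) \ {1,3}).card = 1 := by decide
  simp [blockWit, listCost, c1, c2, c3, c4, c5, c6, c7, c8, d1, d2]; omega

lemma listCost_block01 (L : List (Finset (Fin 4))) :
    listCost {0,1} (blockWit ++ L) = 5 + listCost {0,2} L := by
  have c0 : ((({0,2} : Finset (Fin 4))) \ {0,1}).card = 1 := by decide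
  have c2 : ((({0,3} : Finset (Fin 4))) \ {0,2}).card = 1 := by decide
  have c3 : ((({0,3} : Finset (Fin 4))) \ {0,3}).card = 0 := by decide
  have c4 : ((({1,3} : Finset (Fin 4))) \ {0,3}).card = 1 := by decide
  have c5 : ((({1,3} : Finset (Fin 4))) \ {1,3}).card = 0 := by decide
  have c6 : ((({1,2} : Finset (Fin 4))) \ {1,3}).card = 1 := by decide
  have c7 : ((({1,2} : Finset (Fin 4))) \ {1,2}).card = 0 := by decide
  have c8 : ((({0,2} : Finset (Fin 4))) \ {1,2}).card = 1 := by decide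
  have d1 : ((({3} : Finset (Fin 4))) \ {0,2}).card = 1 := by decide
  have d2 : ((({2} : Finset (Fin 4))) \ {1,3}).card = 1 := by decide
  have d3 : ((({2} : Finset (Fin 4))) \ {0,1}).card = 1 := by decide
  simp [blockWit, listCost, c0, c2, c3, c4, c5, c6, c7, c8, d1, d2, d3]; omega

lemma listCost_wit02 (N : ℕ) : listCost {0,2} (wit N) = 4 * N := by
  induction N with
  | zero => simp [wit, listCost]
  | succ n ih => rw [wit_succ, listCost_block02, ih]; ring

lemma listCost_wit01 (N : ℕ) : listCost {0,1} (wit (N+1)) = 4 * (N+1) + 1 := by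
  rw [wit_succ, listCost_block01, listCost_wit02]; ring

lemma OPT_le (N : ℕ) (hN : 1 ≤ N) : OPT 2 4 (badSeq N) ≤ 4 * N + 1 := by
  obtain ⟨M, rfl⟩ := Nat.exists_eq_add_of_le hN
  have hmem : (4 * (1 + M) + 1) ∈
      {m | ∃ Cs, Serves 2 (badSeq (1+M)) Cs ∧ listCost (initConf 2 4) Cs = m} := by
    refine ⟨wit (1+M), serves_wit _, ?_⟩
    rw [initConf_eq]
    have := listCost_wit01 M
    rw [add_comm 1 M]
    simpa [add_comm M 1] using this
  exact Nat.sInf_le hmem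

def Nice (σ hist : List (Fin 4)) (C : Finset (Fin 4)) (L : ℕ) : Prop :=
  ∀ Cs ∈ (runFrom (markingKernel 2 4) σ hist C).support, listCost C Cs = L

lemma nice_nil (hist : List (Fin 4)) (C : Finset (Fin 4)) : Nice [] hist C 0 := by
  intro Cs hCs
  simp only [runFrom, PMF.support_pure, Set.mem_singleton_iff] at hCs
  subst hCs; rfl

lemma marks_step (h : List (Fin 4)) (r : Fin 4) :
    marksAfter 2 (h ++ [r]) = markUpdate 2 (marksAfter 2 h) r := by
  simp [marksAfter, List.foldl_append]

lemma card_new {C : Finset (Fin 4)} {r u : Fin 4} (hr : r ∉ C) (hu : u ∈ C) :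
    (insert r (C.erase u) \ C).card = 1 := by
  have h : insert r (C.erase u) \ C = {r} := by
    ext x
    simp only [Finset.mem_sdiff, Finset.mem_insert, Finset.mem_erase, Finset.mem_singleton]
    constructor
    · rintro ⟨h1 | ⟨_, h2⟩, h3⟩
      · exact h1
      · exact absurd h2 h3
    · rintro rfl; exact ⟨Or.inl rfl, hr⟩
  rw [h]; rfl

lemma nice_step (r : Fin 4) (σ hist : List (Fin 4)) (C M : Finset (Fin 4)) (L : ℕ)
    (hM : markUpdate 2 (marksAfter 2 hist) r = M)
    (hr : r ∉ C) (hne : (C \ M).Nonempty)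
    (h : ∀ u ∈ C \ M, Nice σ (hist ++ [r]) (insert r (C.erase u)) L) :
    Nice (r :: σ) hist C (1 + L) := by
  have hM' : marksAfter 2 (hist ++ [r]) = M := by rw [marks_step, hM]
  have hk : markingKernel 2 4 hist C r
      = (PMF.uniformOfFinset (C \ M) hne).map fun u => insert r (C.erase u) := by
    simp only [markingKernel, hM']
    rw [if_neg hr, dif_pos hne]
  intro Cs hCs
  rw [runFrom, hk] at hCs
  rw [PMF.support_bind] at hCs
  simp only [Set.mem_iUnion, PMF.support_map, PMF.support_uniformOfFinset, Set.mem_image,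
    Finset.mem_coe] at hCs
  obtain ⟨C', ⟨⟨u, hu, rfl⟩, tl, htl, rfl⟩⟩ := hCs
  have huC : u ∈ C := (Finset.mem_sdiff.1 hu).1
  show (insert r (C.erase u) \ C).card + _ = 1 + L
  rw [card_new hr huC, h u hu tl htl]

lemma nice_pair (r1 r2 : Fin 4) (A T1 T2 B : Finset (Fin 4)) (σ hist : List (Fin 4)) (L : ℕ)
    (hm : marksAfter 2 hist = A)
    (h1 : markUpdate 2 A r1 = T1) (h2 : markUpdate 2 T1 r2 = T2)
    (hr1 : r1 ∉ B) (hne1 : (B \ T1).Nonempty)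
    (hstep : ∀ u ∈ B \ T1, r2 ∉ insert r1 (B.erase u) ∧ ((insert r1 (B.erase u)) \ T2).Nonempty ∧
      ∀ v ∈ (insert r1 (B.erase u)) \ T2,
        insert r2 ((insert r1 (B.erase u)).erase v) = {r1, r2})
    (h : Nice σ ((hist ++ [r1]) ++ [r2]) {r1, r2} L) :
    Nice (r1 :: r2 :: σ) hist B (2 + L) := by
  have e : 2 + L = 1 + (1 + L) := by ring
  rw [e]
  apply nice_step r1 _ _ _ T1 _ (by rw [hm]; exact h1) hr1 hne1
  intro u hu
  obtain ⟨hra, hneb, heq⟩ := hstep u hu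
  apply nice_step r2 _ _ _ T2 _ (by rw [marks_step, hm, h1]; exact h2) hra hneb
  intro v hv
  rw [heq v hv]
  exact h

lemma nice_block (N : ℕ) : ∀ hist : List (Fin 4), marksAfter 2 hist = {0,1} →
    Nice (badSeq N) hist {0,1} (8 * N) := by
  induction N with
  | zero =>
      intro hist _
      have : badSeq 0 = [] := by simp [badSeq]
      rw [this]
      simpa using nice_nil hist {0,1}
  | succ n ih =>
      intro hist hm
      have hσ : badSeq (n+1) =
          2 :: 3 :: 0 :: 1 :: 3 :: 2 :: 1 :: 0 :: badSeq n := by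
        rw [badSeq_succ]; rfl
      rw [hσ]
      have e : 8 * (n+1) = 2 + (2 + (2 + (2 + 8 * n))) := by ring
      rw [e]
      apply nice_pair 2 3 {0,1} {2} {2,3} {0,1} _ _ _ hm (by decide) (by decide)
        (by decide) (by decide) (by decide)
      have m2 : marksAfter 2 ((hist ++ [2]) ++ [3]) = {2,3} := by
        rw [marks_step, marks_step, hm]; decide
      apply nice_pair 0 1 {2,3} {0} {0,1} {2,3} _ _ _ m2 (by decide) (by decide)
        (by decide) (by decide) (by decide)
      have m4 : marksAfter 2 ((((hist ++ [2]) ++ [3]) ++ [0]) ++ [1]) = {0,1} := by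
        rw [marks_step, marks_step, m2]; decide
      apply nice_pair 3 2 {0,1} {3} {2,3} {0,1} _ _ _ m4 (by decide) (by decide)
        (by decide) (by decide) (by decide)
      have m6 : marksAfter 2 ((((((hist ++ [2]) ++ [3]) ++ [0]) ++ [1]) ++ [3]) ++ [2])
          = {2,3} := by
        rw [marks_step, marks_step, m4]; decide
      apply nice_pair 1 0 {2,3} {1} {0,1} {3,2} _ _ _ m6 (by decide) (by decide)
        (by decide) (by decide) (by decide)
      have m8 : marksAfter 2
          ((((((((hist ++ [2]) ++ [3]) ++ [0]) ++ [1]) ++ [3]) ++ [2]) ++ [1]) ++ [0])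
          = {0,1} := by
        rw [marks_step, marks_step, m6]; decide
      have hco : ({1, 0} : Finset (Fin 4)) = {0,1} := by decide
      rw [hco]
      exact ih _ m8

lemma tsum_const_support {α : Type} (p : PMF α) (f : α → ℝ) (L : ℝ)
    (h : ∀ a ∈ p.support, f a = L) : ∑' a, (p a).toReal * f a = L := by
  have h1 : ∀ a, (p a).toReal * f a = (p a).toReal * L := by
    intro a
    by_cases ha : p a = 0
    · simp [ha]
    · rw [h a (PMF.mem_support_iff p a |>.2 ha)]
  have h2 : ∑' a, (p a).toReal = 1 := by
    rw [← ENNReal.tsum_toReal_eq (fun a => PMF.apply_ne_top p a), PMF.tsum_coe]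
    simp
  calc ∑' a, (p a).toReal * f a = ∑' a, (p a).toReal * L := tsum_congr h1
    _ = (∑' a, (p a).toReal) * L := tsum_mul_right
    _ = L := by rw [h2, one_mul]

lemma expCost_eq (N : ℕ) :
    expCost 2 (markingKernel 2 4) (badSeq N) = ((8 * N : ℕ) : ℝ) := by
  have hn : Nice (badSeq N) [] (initConf 2 4) (8 * N) := by
    rw [initConf_eq]
    exact nice_block N [] (by decide)
  unfold expCost run
  rw [initConf_eq] at hn ⊢
  exact tsum_const_support _ _ _ (fun Cs hCs => by rw [hn Cs hCs])


/-- On `N` repetitions of the block `(2,3,0,1,3,2,1,0)` the marking algorithm of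
type `(2,4)` incurs expected cost exactly `8N` while the optimum is at most
`4N + 1`; consequently the marking algorithm of type `(2,4)` is not
`c`-competitive for any `c < 2` (in particular not `H_2`-competitive, where
`H_2 = 3/2`). -/
theorem marking_not_c_competitive_for_c_lt_two :
    (∀ N : ℕ, 1 ≤ N →
      expCost 2 (markingKernel 2 4) (badSeq N) = 8 * N ∧
      (OPT 2 4 (badSeq N) : ℝ) ≤ 4 * N + 1) ∧
    (∀ c : ℝ, c < 2 →
      ¬ ∃ a : ℝ, ∀ σ : List (Fin 4),
        expCost 2 (markingKernel 2 4) σ ≤ c * (OPT 2 4 σ : ℝ) + a) := by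
  have part1 : ∀ N : ℕ, 1 ≤ N →
      expCost 2 (markingKernel 2 4) (badSeq N) = 8 * N ∧
      (OPT 2 4 (badSeq N) : ℝ) ≤ 4 * N + 1 := by
    intro N hN
    constructor
    · rw [expCost_eq]; push_cast; ring
    · have h := OPT_le N hN
      have h' : ((OPT 2 4 (badSeq N) : ℕ) : ℝ) ≤ ((4 * N + 1 : ℕ) : ℝ) := Nat.cast_le.2 h
      push_cast at h'
      linarith
  refine ⟨part1, ?_⟩
  rintro c hc ⟨a, ha⟩
  set c' := max c 0 with hc'def
  have hc'2 : c' < 2 := max_lt hc (by norm_num)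
  have hc'0 : 0 ≤ c' := le_max_right _ _
  have hpos : 0 < 8 - 4 * c' := by linarith
  obtain ⟨N, hN⟩ := exists_nat_gt (max 1 ((c' + a) / (8 - 4 * c')))
  have hN1 : 1 ≤ N := by
    have h1r : (1 : ℝ) < N := lt_of_le_of_lt (le_max_left _ _) hN
    exact_mod_cast h1r.le
  obtain ⟨hE, hO⟩ := part1 N hN1
  have h1 := ha (badSeq N)
  rw [hE] at h1
  have h2 : c * (OPT 2 4 (badSeq N) : ℝ) ≤ c' * (OPT 2 4 (badSeq N) : ℝ) :=
    mul_le_mul_of_nonneg_right (le_max_left c 0) (Nat.cast_nonneg _)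
  have h3 : c' * (OPT 2 4 (badSeq N) : ℝ) ≤ c' * (4 * N + 1) :=
    mul_le_mul_of_nonneg_left hO hc'0
  have h4 : (c' + a) / (8 - 4 * c') < N := lt_of_le_of_lt (le_max_right _ _) hN
  have h5 : c' + a < N * (8 - 4 * c') := (div_lt_iff₀ hpos).1 h4
  nlinarith
end
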